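/- Assume the separation hypothesis. Let λ, μ ∈ P_n with λ ⊴ μ and λ ≠ μ. If there exists a standard tableau t of shape λ with res(t) = res(t^μ), then λ ⊴' μ (and λ ≠ μ). -/

import Mathlib

/-- The total order on boxes `(i,l)`: `(i,l) ≤ (i',l')` iff `l < l'`, or `l = l'`
and `i ≤ i'`. -/
def bLE {p d : ℕ} (b b' : Fin p × Fin d) : Prop :=
  b.2 < b'.2 ∨ (b.2 = b'.2 ∧ b.1 ≤ b'.1)

/-- The strict version of the total order on boxes. -/
def bLT {p d : ℕ} (b b' : Fin p × Fin d) : Prop :=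
  b.2 < b'.2 ∨ (b.2 = b'.2 ∧ b.1 < b'.1)

/-- The partial order `≤'` on boxes: `(i,l) ≤' (i',l')` iff `l < l'` or
`(i,l) = (i',l')`. -/
def bLE' {p d : ℕ} (b b' : Fin p × Fin d) : Prop :=
  b.2 < b'.2 ∨ b = b'

/-- A 3D multipartition of `n` with at most two nonempty components: either a
single column of `n` nodes on a box, or two columns of sizes `c₁ ≥ 1` and
`n - c₁ ≥ 1` on boxes `b₁ < b₂` (in the total order). -/
inductive MP (p d n : ℕ) : Type where
  | single (b : Fin p × Fin d) : MP p d n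
  | double (b₁ b₂ : Fin p × Fin d) (c₁ : ℕ)
      (hlt : bLT b₁ b₂) (hc1 : 1 ≤ c₁) (hc2 : c₁ < n) : MP p d n

/-- The dominance-type relation on multipartitions associated to a relation `rB`
on boxes; with `rB = bLE` this is `⊴` and with `rB = bLE'` this is `⊴'`.
For doubles, `a = c₁ - c₂ = 2c₁ - n`. -/
def dom {p d n : ℕ} (rB : (Fin p × Fin d) → (Fin p × Fin d) → Prop) :
    MP p d n → MP p d n → Prop
  | .single b₁, .single b₂ => rB b₁ b₂
  | .single _, .double _ _ _ _ _ _ => False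
  | .double b₁ _ _ _ _ _, .single b₃ => rB b₁ b₃
  | .double b₁ b₂ c _ _ _, .double b₃ b₄ c' _ _ _ =>
      rB b₁ b₃ ∧ rB b₂ b₄ ∧
      (|2 * (c : ℤ) - n| < |2 * (c' : ℤ) - n| ∨
       (|2 * (c : ℤ) - n| = |2 * (c' : ℤ) - n| ∧ 2 * (c : ℤ) - n ≥ 2 * (c' : ℤ) - n) ∨
       (|2 * (c : ℤ) - n| = |2 * (c' : ℤ) - n| ∧ 2 * (c : ℤ) - n < 2 * (c' : ℤ) - n ∧
        rB b₂ b₃))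

/-- A node: a (1-based) row index together with a box. -/
abbrev Nd (p d : ℕ) : Type := ℕ × (Fin p × Fin d)

/-- The set of nodes of a multipartition. -/
def nodes {p d n : ℕ} : MP p d n → Set (Nd p d)
  | .single b => {x | x.2 = b ∧ 1 ≤ x.1 ∧ x.1 ≤ n}
  | .double b₁ b₂ c₁ _ _ _ =>
      {x | (x.2 = b₁ ∧ 1 ≤ x.1 ∧ x.1 ≤ c₁) ∨ (x.2 = b₂ ∧ 1 ≤ x.1 ∧ x.1 ≤ n - c₁)}

/-- A tableau of shape `l`: a bijection from `{1, …, n}` (modelled as `Fin n`,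
with `m : Fin n` representing the entry `m + 1`) onto the nodes of `l`. -/
def IsTab {p d n : ℕ} (l : MP p d n) (t : Fin n → Nd p d) : Prop :=
  Function.Injective t ∧ Set.range t = nodes l

/-- A standard tableau: a tableau in which, within each column, the entries
increase with the row index. -/
def IsStd {p d n : ℕ} (l : MP p d n) (t : Fin n → Nd p d) : Prop :=
  IsTab l t ∧
  ∀ m m' : Fin n, (t m).2 = (t m').2 → (t m).1 < (t m').1 → m < m'

/-- The residue of a node: the node in row `a` on box `(i,l)` has residue
`(i, j_l + 1 − a) ∈ ℤ/pℤ × ℤ/eℤ`. -/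
def resNd {p d : ℕ} (e : ℕ) (j : Fin d → ZMod e) (x : Nd p d) : ZMod p × ZMod e :=
  ((x.2.1 : ZMod p), j x.2.2 + 1 - (x.1 : ZMod e))

/-- The separation hypothesis: the `2r` elements `(i, j_l)` and `(i, j_l − 1)`,
for `(i,l) ∈ 𝒦`, are pairwise distinct. -/
def SepHyp (p d e : ℕ) (j : Fin d → ZMod e) : Prop :=
  Function.Injective (fun x : (Fin p × Fin d) × Bool =>
    (((x.1.1 : ZMod p), j x.1.2 - (if x.2 then 1 else 0)) : ZMod p × ZMod e))

/-- The total order on nodes: `(a,(i,l)) < (a',(i',l'))` iff `a < a'`, or `a = a'`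
and `l < l'`, or `a = a'`, `l = l'` and `i < i'`. -/
def ndLT {p d : ℕ} (x y : Nd p d) : Prop :=
  x.1 < y.1 ∨ (x.1 = y.1 ∧ (x.2.2 < y.2.2 ∨ (x.2.2 = y.2.2 ∧ x.2.1 < y.2.1)))

/-!
The initial tableau `t^μ` fills the first row before any second row, so when `μ` has two
columns its first two entries are the top nodes of these columns, in order. A standard
tableau `t` of shape `λ` has its first entry in row 1 and its second either in row 1 on
another box or in row 2 directly below the first. Under the separation hypothesis a row-1
residue `(i, j_l)` determines its box and is never a row-2 residue `(i, j_l - 1)`, so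
equality of residue sequences forces the boxes of `λ` to coincide with those of `μ`, in the
same order; then `⊴` and `⊴'` agree on the pair.
-/

lemma bLT.ne {p d : ℕ} {b b' : Fin p × Fin d} (h : bLT b b') : b ≠ b' := by
  rintro rfl
  rcases h with h | ⟨_, h⟩ <;> exact lt_irrefl _ h

lemma bLT.le {p d : ℕ} {b b' : Fin p × Fin d} (h : bLT b b') : bLE b b' :=
  h.imp_right fun h => ⟨h.1, h.2.le⟩

lemma bLT.not_bLE {p d : ℕ} {b b' : Fin p × Fin d} (h : bLT b b') : ¬ bLE b' b := by
  unfold bLT bLE at *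
  omega

lemma ndLT.not_ndLT {p d : ℕ} {x y : Nd p d} (h : ndLT x y) : ¬ ndLT y x := by
  unfold ndLT at *
  omega

lemma one_le_fst_of_mem_nodes {p d n : ℕ} {l : MP p d n} {x : Nd p d} (hx : x ∈ nodes l) :
    1 ≤ x.1 := by
  cases l with
  | single b => exact hx.2.1
  | double => rcases hx with ⟨_, h, _⟩ | ⟨_, h, _⟩ <;> exact h

lemma mem_nodes_of_le_fst {p d n : ℕ} {l : MP p d n} {x : Nd p d} (hx : x ∈ nodes l)
    {a : ℕ} (h1 : 1 ≤ a) (h2 : a ≤ x.1) : ((a, x.2) : Nd p d) ∈ nodes l := by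
  cases l with
  | single b => exact ⟨hx.1, h1, h2.trans hx.2.2⟩
  | double =>
    rcases hx with ⟨hb, _, hc⟩ | ⟨hb, _, hc⟩
    · exact Or.inl ⟨hb, h1, h2.trans hc⟩
    · exact Or.inr ⟨hb, h1, h2.trans hc⟩

lemma snd_eq_or_of_mem_nodes_double {p d n : ℕ} {b₁ b₂ : Fin p × Fin d} {c : ℕ}
    {hlt : bLT b₁ b₂} {hc1 : 1 ≤ c} {hc2 : c < n} {x : Nd p d}
    (hx : x ∈ nodes (MP.double b₁ b₂ c hlt hc1 hc2)) : x.2 = b₁ ∨ x.2 = b₂ :=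
  hx.imp And.left And.left

section Residues

variable {p d e : ℕ} {j : Fin d → ZMod e}

lemma fst_snd_eq_of_resNd_eq {x y : Nd p d} (h : resNd e j x = resNd e j y) :
    x.2.1 = y.2.1 := by
  have h1 := (ZMod.natCast_eq_natCast_iff' _ _ p).mp (congrArg Prod.fst h)
  rwa [Nat.mod_eq_of_lt x.2.1.isLt, Nat.mod_eq_of_lt y.2.1.isLt, ← Fin.ext_iff] at h1

lemma resNd_of_fst_eq_one {x : Nd p d} (hx : x.1 = 1) :
    resNd e j x = ((x.2.1 : ZMod p), j x.2.2) := by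
  simp [resNd, hx]

lemma resNd_of_fst_eq_two {x : Nd p d} (hx : x.1 = 2) :
    resNd e j x = ((x.2.1 : ZMod p), j x.2.2 - 1) := by
  simp only [resNd, hx, Nat.cast_ofNat]
  ring_nf

lemma SepHyp.snd_eq_of_resNd_eq (hsep : SepHyp p d e j) {x y : Nd p d}
    (hx : x.1 = 1) (hy : y.1 = 1) (h : resNd e j x = resNd e j y) : x.2 = y.2 :=
  congrArg Prod.fst <| @hsep (x.2, false) (y.2, false) <| by
    simpa [resNd_of_fst_eq_one hx, resNd_of_fst_eq_one hy] using h

lemma SepHyp.resNd_ne_of_fst_eq_two (hsep : SepHyp p d e j) {x y : Nd p d}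
    (hx : x.1 = 2) (hy : y.1 = 1) : resNd e j x ≠ resNd e j y := fun h =>
  Bool.noConfusion <| congrArg Prod.snd <| @hsep (x.2, true) (y.2, false) <| by
    simpa [resNd_of_fst_eq_two hx, resNd_of_fst_eq_one hy] using h

end Residues

section Tableaux

variable {p d n : ℕ}

lemma IsTab.mem_nodes {l : MP p d n} {t : Fin n → Nd p d} (ht : IsTab l t) (k : Fin n) :
    t k ∈ nodes l :=
  ht.2 ▸ Set.mem_range_self k

lemma IsTab.exists_eq {l : MP p d n} {t : Fin n → Nd p d} (ht : IsTab l t) {x : Nd p d}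
    (hx : x ∈ nodes l) : ∃ k, t k = x :=
  (ht.2 ▸ hx : x ∈ Set.range t)

lemma IsStd.exists_lt_eq_pred_fst {l : MP p d n} {t : Fin n → Nd p d} (ht : IsStd l t)
    (m : Fin n) (hm : 2 ≤ (t m).1) : ∃ k < m, t k = ((t m).1 - 1, (t m).2) := by
  obtain ⟨k, hk⟩ := ht.1.exists_eq
    (mem_nodes_of_le_fst (a := (t m).1 - 1) (ht.1.mem_nodes m) (by omega) (by omega))
  exact ⟨k, ht.2 k m (by rw [hk]) (by rw [hk]; dsimp only; omega), hk⟩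

lemma IsStd.fst_eq_one_of_val_eq_zero {l : MP p d n} {t : Fin n → Nd p d} (ht : IsStd l t)
    (z : Fin n) (hz : (z : ℕ) = 0) : (t z).1 = 1 := by
  have := one_le_fst_of_mem_nodes (ht.1.mem_nodes z)
  by_contra h
  obtain ⟨k, hk, -⟩ := ht.exists_lt_eq_pred_fst z (by omega)
  exact absurd hk (by rw [Fin.lt_def]; omega)

lemma IsStd.second_entry_cases {l : MP p d n} {t : Fin n → Nd p d} (ht : IsStd l t)
    (z o : Fin n) (hz : (z : ℕ) = 0) (ho : (o : ℕ) = 1) :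
    ((t o).1 = 2 ∧ (t o).2 = (t z).2) ∨ ((t o).1 = 1 ∧ (t o).2 ≠ (t z).2) := by
  have htz := ht.fst_eq_one_of_val_eq_zero z hz
  have := one_le_fst_of_mem_nodes (ht.1.mem_nodes o)
  by_cases hrow : 2 ≤ (t o).1
  · obtain ⟨k, hk, hkeq⟩ := ht.exists_lt_eq_pred_fst o hrow
    obtain rfl : k = z := Fin.ext (by rw [Fin.lt_def] at hk; omega)
    rw [Prod.ext_iff] at hkeq
    exact Or.inl ⟨by omega, hkeq.2.symm⟩
  · refine Or.inr ⟨by omega, fun hbox => ?_⟩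
    have := ht.1.1 (Prod.ext (by omega) hbox)
    rw [Fin.ext_iff] at this
    omega

lemma IsTab.eq_of_forall_ndLT {m : MP p d n} {u : Fin n → Nd p d} (hu : IsTab m u)
    (hinit : ∀ a b : Fin n, a < b → ndLT (u a) (u b)) (k : Fin n) {x : Nd p d}
    (hx : x ∈ nodes m) (hearlier : ∀ k' < k, u k' ≠ x)
    (hmin : ∀ y ∈ nodes m, y ≠ x → (∀ k' < k, u k' ≠ y) → ndLT x y) : u k = x := by
  by_contra hne
  obtain ⟨k', hk'⟩ := hu.exists_eq hx
  have hlt : ndLT x (u k) :=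
    hmin _ (hu.mem_nodes k) hne fun k'' hk'' h => hk''.ne (hu.1 h)
  rcases lt_trichotomy k' k with h | rfl | h
  · exact hearlier k' h hk'
  · exact hne hk'
  · exact hlt.not_ndLT (hk' ▸ hinit k k' h)

end Tableaux

section InitialTableau

variable {p d n : ℕ} {u : Fin n → Nd p d}

lemma IsTab.apply_zero_of_initial_single {b : Fin p × Fin d} (hu : IsTab (MP.single b) u)
    (hinit : ∀ a b : Fin n, a < b → ndLT (u a) (u b)) (z : Fin n) (hz : (z : ℕ) = 0) :
    u z = (1, b) := by
  refine hu.eq_of_forall_ndLT hinit z ⟨rfl, le_rfl, by omega⟩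
    (fun k hk => absurd hk (by rw [Fin.lt_def]; omega)) ?_
  rintro y ⟨hb, h1, -⟩ hne -
  exact Or.inl (lt_of_le_of_ne h1 fun h => hne (Prod.ext h.symm hb))

variable {b₁ b₂ : Fin p × Fin d} {c : ℕ} {hlt : bLT b₁ b₂} {hc1 : 1 ≤ c} {hc2 : c < n}

lemma IsTab.apply_zero_of_initial_double (hu : IsTab (MP.double b₁ b₂ c hlt hc1 hc2) u)
    (hinit : ∀ a b : Fin n, a < b → ndLT (u a) (u b)) (z : Fin n) (hz : (z : ℕ) = 0) :
    u z = (1, b₁) := by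
  refine hu.eq_of_forall_ndLT hinit z (Or.inl ⟨rfl, le_rfl, hc1⟩)
    (fun k hk => absurd hk (by rw [Fin.lt_def]; omega)) ?_
  rintro y (⟨hb, h1, -⟩ | ⟨hb, h1, -⟩) hne -
  · exact Or.inl (lt_of_le_of_ne h1 fun h => hne (Prod.ext h.symm hb))
  · unfold ndLT
    unfold bLT at hlt
    rw [hb]
    dsimp only
    omega

lemma IsTab.apply_one_of_initial_double (hu : IsTab (MP.double b₁ b₂ c hlt hc1 hc2) u)
    (hinit : ∀ a b : Fin n, a < b → ndLT (u a) (u b)) (z o : Fin n) (hz : (z : ℕ) = 0)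
    (ho : (o : ℕ) = 1) : u o = (1, b₂) := by
  have huz := hu.apply_zero_of_initial_double hinit z hz
  refine hu.eq_of_forall_ndLT hinit o (Or.inr ⟨rfl, le_rfl, by omega⟩) ?_ ?_
  · intro k hk
    obtain rfl : k = z := Fin.ext (by rw [Fin.lt_def] at hk; omega)
    rw [huz]
    exact fun h => hlt.ne (congrArg Prod.snd h)
  · intro y hy hne hearlier
    have hyz := hearlier z (by rw [Fin.lt_def]; omega)
    rw [huz] at hyz
    have := one_le_fst_of_mem_nodes hy
    refine Or.inl (lt_of_le_of_ne this fun h => ?_)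
    rcases snd_eq_or_of_mem_nodes_double hy with hb | hb
    · exact hyz (Prod.ext h hb.symm)
    · exact hne (Prod.ext h.symm hb)

end InitialTableau

section ShapeCases

variable {p d n e : ℕ} {j : Fin d → ZMod e} {t u : Fin n → Nd p d}

lemma SepHyp.eq_of_single_single (hsep : SepHyp p d e j) {b₁ b₃ : Fin p × Fin d}
    (ht : IsStd (MP.single b₁) t) (hu : IsTab (MP.single b₃) u)
    (hinit : ∀ a b : Fin n, a < b → ndLT (u a) (u b))
    (hres : ∀ a : Fin n, resNd e j (t a) = resNd e j (u a)) (z : Fin n) (hz : (z : ℕ) = 0) :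
    b₁ = b₃ := by
  have huz := hu.apply_zero_of_initial_single hinit z hz
  calc b₁ = (t z).2 := (ht.1.mem_nodes z).1.symm
    _ = (u z).2 :=
      hsep.snd_eq_of_resNd_eq (ht.fst_eq_one_of_val_eq_zero z hz) (by rw [huz]) (hres z)
    _ = b₃ := by rw [huz]

lemma SepHyp.bLE'_of_double_single (hsep : SepHyp p d e j) {b₁ b₂ b₃ : Fin p × Fin d}
    {c : ℕ} {hlt : bLT b₁ b₂} {hc1 : 1 ≤ c} {hc2 : c < n}
    (ht : IsStd (MP.double b₁ b₂ c hlt hc1 hc2) t) (hu : IsTab (MP.single b₃) u)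
    (hinit : ∀ a b : Fin n, a < b → ndLT (u a) (u b))
    (hres : ∀ a : Fin n, resNd e j (t a) = resNd e j (u a)) (z : Fin n) (hz : (z : ℕ) = 0) :
    bLE' b₁ b₃ := by
  have huz := hu.apply_zero_of_initial_single hinit z hz
  have htz : (t z).2 = b₃ := by
    simpa [huz] using
      hsep.snd_eq_of_resNd_eq (ht.fst_eq_one_of_val_eq_zero z hz) (by rw [huz]) (hres z)
  rcases snd_eq_or_of_mem_nodes_double (ht.1.mem_nodes z) with h | h
  · exact Or.inr (h.symm.trans htz)
  · obtain rfl : b₂ = b₃ := h.symm.trans htz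
    -- every residue of `u` has first coordinate `b₂.1`, so the column on `b₁` lies in the
    -- same `i`-slice as `b₂`, and `b₁ < b₂` must come from the levels
    obtain ⟨k, hk⟩ := ht.1.exists_eq (Or.inl ⟨rfl, le_rfl, hc1⟩ : ((1, b₁) : Nd p d) ∈ _)
    have hi : b₁.1 = b₂.1 := by
      have := fst_snd_eq_of_resNd_eq (hres k)
      rwa [hk, (hu.mem_nodes k).1] at this
    unfold bLT at hlt
    unfold bLE'
    omega

lemma SepHyp.eq_of_double_double (hsep : SepHyp p d e j) {b₁ b₂ b₃ b₄ : Fin p × Fin d}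
    {c c' : ℕ} {hlt : bLT b₁ b₂} {hc1 : 1 ≤ c} {hc2 : c < n}
    {hlt' : bLT b₃ b₄} {hc1' : 1 ≤ c'} {hc2' : c' < n}
    (ht : IsStd (MP.double b₁ b₂ c hlt hc1 hc2) t)
    (hu : IsTab (MP.double b₃ b₄ c' hlt' hc1' hc2') u)
    (hinit : ∀ a b : Fin n, a < b → ndLT (u a) (u b))
    (hres : ∀ a : Fin n, resNd e j (t a) = resNd e j (u a))
    (z o : Fin n) (hz : (z : ℕ) = 0) (ho : (o : ℕ) = 1) : b₁ = b₃ ∧ b₂ = b₄ := by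
  have huz := hu.apply_zero_of_initial_double hinit z hz
  have huo := hu.apply_one_of_initial_double hinit z o hz ho
  have htz : (t z).2 = b₃ := by
    simpa [huz] using
      hsep.snd_eq_of_resNd_eq (ht.fst_eq_one_of_val_eq_zero z hz) (by rw [huz]) (hres z)
  obtain ⟨hto1, hto_ne⟩ : (t o).1 = 1 ∧ (t o).2 ≠ (t z).2 :=
    (ht.second_entry_cases z o hz ho).resolve_left fun ⟨h2, _⟩ =>
      hsep.resNd_ne_of_fst_eq_two h2 (by rw [huo]) (hres o)
  have hto : (t o).2 = b₄ := by
    simpa [huo] using hsep.snd_eq_of_resNd_eq hto1 (by rw [huo]) (hres o)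
  rcases snd_eq_or_of_mem_nodes_double (ht.1.mem_nodes z) with h | h <;>
    rcases snd_eq_or_of_mem_nodes_double (ht.1.mem_nodes o) with h' | h'
  · exact absurd (h'.trans h.symm) hto_ne
  · exact ⟨h.symm.trans htz, h'.symm.trans hto⟩
  · rw [← htz, ← hto, h, h'] at hlt'
    exact absurd hlt.le hlt'.not_bLE
  · exact absurd (h'.trans h.symm) hto_ne

end ShapeCases

lemma dom_bLE'_double_of_dom_bLE {p d n : ℕ} {b₁ b₂ : Fin p × Fin d} {c c' : ℕ}
    {hlt : bLT b₁ b₂} {hc1 : 1 ≤ c} {hc2 : c < n}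
    {hlt' : bLT b₁ b₂} {hc1' : 1 ≤ c'} {hc2' : c' < n}
    (h : dom bLE (MP.double b₁ b₂ c hlt hc1 hc2) (MP.double b₁ b₂ c' hlt' hc1' hc2')) :
    dom bLE' (MP.double b₁ b₂ c hlt hc1 hc2) (MP.double b₁ b₂ c' hlt' hc1' hc2') := by
  obtain ⟨-, -, hC | hC | ⟨-, -, h21⟩⟩ := h
  · exact ⟨Or.inr rfl, Or.inr rfl, Or.inl hC⟩
  · exact ⟨Or.inr rfl, Or.inr rfl, Or.inr (Or.inl hC)⟩
  · exact absurd h21 hlt.not_bLE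

theorem dom_bLE'_of_res_eq_initial_general (p d n : ℕ) (hn : 1 ≤ n)
    (e : ℕ) (j : Fin d → ZMod e) (hsep : SepHyp p d e j)
    (l m : MP p d n) (hle : dom bLE l m) (hne : l ≠ m)
    (t : Fin n → Nd p d) (ht : IsStd l t)
    (u : Fin n → Nd p d) (hu : IsTab m u)
    (hinit : ∀ a b : Fin n, a < b → ndLT (u a) (u b))
    (hres : ∀ a : Fin n, resNd e j (t a) = resNd e j (u a)) :
    dom bLE' l m ∧ l ≠ m := by
  refine ⟨?_, hne⟩
  cases l with
  | single b₁ =>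
    cases m with
    | single b₃ =>
      exact absurd
        (congrArg MP.single (hsep.eq_of_single_single ht hu hinit hres ⟨0, hn⟩ rfl)) hne
    | double => exact hle.elim
  | double b₁ b₂ c hlt hc1 hc2 =>
    cases m with
    | single b₃ => exact hsep.bLE'_of_double_single ht hu hinit hres ⟨0, hn⟩ rfl
    | double b₃ b₄ c' hlt' hc1' hc2' =>
      obtain ⟨rfl, rfl⟩ :=
        hsep.eq_of_double_double ht hu hinit hres ⟨0, hn⟩ ⟨1, by omega⟩ rfl rfl
      exact dom_bLE'_double_of_dom_bLE hle

/-- under the separation hypothesis, if `λ ⊴ μ`, `λ ≠ μ`, and some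
standard tableau `t` of shape `λ` has the same residue sequence as the initial
tableau `t^μ` of shape `μ` (the tableau whose entries increase along the total
order on nodes), then `λ ⊴' μ` (and `λ ≠ μ`). -/
theorem dom_bLE'_of_res_eq_initial (p d n : ℕ) (hp : 1 ≤ p) (hd : 1 ≤ d) (hn : 1 ≤ n)
    (e : ℕ) (j : Fin d → ZMod e) (hsep : SepHyp p d e j)
    (l m : MP p d n) (hle : dom bLE l m) (hne : l ≠ m)
    (t : Fin n → Nd p d) (ht : IsStd l t)
    (u : Fin n → Nd p d) (hu : IsTab m u)
    (hinit : ∀ a b : Fin n, a < b → ndLT (u a) (u b))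
    (hres : ∀ a : Fin n, resNd e j (t a) = resNd e j (u a)) :
    dom bLE' l m ∧ l ≠ m :=
  dom_bLE'_of_res_eq_initial_general p d n hn e j hsep l m hle hne t ht u hu hinit hres
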